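/- Suppose {a_n}_{n=0}^∞ is a Stieltjes moment sequence with representing measure μ, κ is an integer ≥ 2, and {a_n^{1/κ}}_{n=0}^∞ is a Stieltjes moment sequence with representing measure ν. Suppose ν((α,β)) = 0 for some real α, β with 0 ≤ α < β ≤ γ := sup supp ν < ∞ and α·γ^{κ−1} < β^κ. Set θ1 := α·γ^{κ−1}, θ2 := β^κ, θ3 := γ^κ. Then: (i) μ((θ1,θ2)) = 0 and θ3 = sup supp μ < ∞; (ii) α ∈ supp ν if and only if θ1 ∈ supp μ; (iii) β ∈ supp ν if and only if θ2 ∈ supp μ. -/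

import Mathlib

/-!
The `κ`-fold multiplicative convolution power `ν^{∗κ}` has moments `(a_n^{1/κ})^κ = a_n`, and its
support is the set `(supp ν)^κ` of `κ`-fold products of points of `supp ν`, a compact subset of
`[0, γ^κ]`. A moment sequence with a representing measure on some `[0, R]` satisfies
`a_n ≤ a_0 R^n`, which confines every representing measure to `[0, R]`; by Weierstrass
approximation such measures are determined by their moments, so `μ = ν^{∗κ}` and
`supp μ = (supp ν)^κ`.

Everything is now a statement about the closed set `S = supp ν ⊆ [0, α] ∪ [β, γ]` with `γ ∈ S`:
every product of `κ` points of such a set lies in `[0, α γ^{κ-1}] ∪ [β^κ, γ^κ]`. If `α ∉ S`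
(resp. `β ∉ S`), closedness lets one shrink `α` (resp. enlarge `β`) in this inclusion, which
excludes `α γ^{κ-1}` (resp. `β^κ`) from `S^κ`.
-/

open MeasureTheory

/-- The closed support of a Borel measure: the set of points all of whose open
neighbourhoods have positive measure. -/
def msupport {X : Type*} [TopologicalSpace X] [MeasurableSpace X] (μ : Measure X) : Set X :=
  {x | ∀ U : Set X, IsOpen U → x ∈ U → 0 < μ U}

/-- `μ` is a representing measure (on `[0,∞)`, modelled as a measure on `ℝ` vanishing on
`(-∞,0)`) of the Stieltjes moment sequence `a`. -/
def IsRepMeas (a : ℕ → ℝ) (μ : Measure ℝ) : Prop :=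
  (∀ n, 0 ≤ a n) ∧ μ (Set.Iio 0) = 0 ∧
    ∀ n : ℕ, ∫⁻ x, ENNReal.ofReal (x ^ n) ∂μ = ENNReal.ofReal (a n)

/-- `a` is a Stieltjes moment sequence. -/
def IsStieltjes (a : ℕ → ℝ) : Prop :=
  ∃ μ : Measure ℝ, IsRepMeas a μ

/-- A Stieltjes moment sequence is determinate if it has a unique representing measure. -/
def IsDeterminate (a : ℕ → ℝ) : Prop :=
  ∀ μ ν : Measure ℝ, IsRepMeas a μ → IsRepMeas a ν → μ = ν

open Set Filter Topology Measure
open scoped ENNReal Pointwise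

lemma msupport_eq_support {X : Type*} [TopologicalSpace X] [MeasurableSpace X]
    (μ : Measure X) : msupport μ = μ.support := by
  ext x
  simp only [msupport, support_eq_forall_isOpen, mem_ofPred_eq]
  exact forall_congr' fun U => forall_comm

lemma measure_eq_zero_of_disjoint_support {X : Type*} [TopologicalSpace X] [MeasurableSpace X]
    [HereditarilyLindelofSpace X] {μ : Measure X} {U : Set X} (h : Disjoint μ.support U) :
    μ U = 0 :=
  measure_mono_null h.subset_compl_left measure_compl_support

section Convolution

variable {M : Type*} [Monoid M] [MeasurableSpace M] [MeasurableMul₂ M]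

lemma ae_mem_of_mconv {σ τ : Measure M} [SFinite τ] {A B C : Set M}
    (hA : ∀ᵐ x ∂σ, x ∈ A) (hB : ∀ᵐ y ∂τ, y ∈ B) (hC : MeasurableSet C) (hABC : A * B ⊆ C) :
    ∀ᵐ z ∂(σ ∗ₘ τ), z ∈ C := by
  refine (ae_map_iff measurable_mul.aemeasurable hC).2 ?_
  filter_upwards [quasiMeasurePreserving_fst.ae hA, quasiMeasurePreserving_snd.ae hB]
    with p hp₁ hp₂ using hABC (mul_mem_mul hp₁ hp₂)

variable [TopologicalSpace M]

lemma support_mconv_subset [OpensMeasurableSpace M] [HereditarilyLindelofSpace M]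
    (σ τ : Measure M) [SFinite τ] :
    (σ ∗ₘ τ).support ⊆ closure (σ.support * τ.support) :=
  support_subset_of_isClosed isClosed_closure <|
    ae_mem_of_mconv support_mem_ae support_mem_ae isClosed_closure.measurableSet subset_closure

variable [ContinuousMul M]

lemma mul_subset_support_mconv (σ τ : Measure M) [SFinite τ] :
    σ.support * τ.support ⊆ (σ ∗ₘ τ).support := by
  rintro _ ⟨x, hx, y, hy, rfl⟩
  rw [mem_support_iff_forall] at hx hy ⊢
  intro U hU
  obtain ⟨u, hu, v, hv, huv⟩ :=
    mem_nhds_prod_iff.1 (continuous_mul.continuousAt.preimage_mem_nhds (x := (x, y)) hU)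
  calc 0 < σ u * τ v := ENNReal.mul_pos (hx u hu).ne' (hy v hv).ne'
    _ = σ.prod τ (u ×ˢ v) := (prod_prod u v).symm
    _ ≤ σ.prod τ ((fun p : M × M => p.1 * p.2) ⁻¹' U) := measure_mono huv
    _ ≤ (σ ∗ₘ τ) U := le_map_apply measurable_mul.aemeasurable U

lemma support_mconv [OpensMeasurableSpace M] [HereditarilyLindelofSpace M]
    (σ τ : Measure M) [SFinite τ] (h : IsClosed (σ.support * τ.support)) :
    (σ ∗ₘ τ).support = σ.support * τ.support :=
  (h.closure_eq ▸ support_mconv_subset σ τ).antisymm (mul_subset_support_mconv σ τ)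

end Convolution

lemma support_dirac {X : Type*} [TopologicalSpace X] [MeasurableSpace X] [T1Space X]
    [OpensMeasurableSpace X] (x : X) : (dirac x).support = {x} := by
  ext y
  rw [mem_support_iff_forall, mem_singleton_iff]
  refine ⟨fun h => by_contra fun hyx => ?_, ?_⟩
  · have := h {x}ᶜ (isOpen_compl_singleton.mem_nhds hyx)
    simp at this
  · rintro rfl U hU
    simp [dirac_apply_of_mem (mem_of_mem_nhds hU)]

section ConvolutionPower

variable {M : Type*} [Monoid M] [MeasurableSpace M] [MeasurableMul₂ M]

noncomputable def mconvPow (ν : Measure M) : ℕ → Measure M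
  | 0 => dirac 1
  | n + 1 => ν ∗ₘ mconvPow ν n

instance (ν : Measure M) [SFinite ν] (n : ℕ) : SFinite (mconvPow ν n) := by
  induction n with
  | zero => rw [mconvPow]; infer_instance
  | succ n ih => rw [mconvPow]; infer_instance

lemma support_mconvPow [TopologicalSpace M] [ContinuousMul M] [T2Space M]
    [OpensMeasurableSpace M] [HereditarilyLindelofSpace M] (ν : Measure M) [SFinite ν]
    (hν : IsCompact ν.support) (n : ℕ) : (mconvPow ν n).support = ν.support ^ n := by
  have hcompact : ∀ n : ℕ, IsCompact (ν.support ^ n) := by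
    intro n
    induction n with
    | zero => simp
    | succ n ih => rw [pow_succ']; exact hν.mul ih
  induction n with
  | zero => rw [mconvPow, support_dirac, pow_zero, Set.singleton_one]
  | succ n ih =>
    have hclosed : IsClosed (ν.support * (mconvPow ν n).support) := by
      rw [ih, ← pow_succ']
      exact (hcompact _).isClosed
    rw [mconvPow, support_mconv _ _ hclosed, ih, pow_succ']

end ConvolutionPower

section Determinacy

open Polynomial

lemma Continuous.integrable_of_ae_mem_Icc {ρ : Measure ℝ} [IsFiniteMeasure ρ] {a b : ℝ}
    (hρ : ∀ᵐ x ∂ρ, x ∈ Icc a b) {f : ℝ → ℝ} (hf : Continuous f) : Integrable f ρ := by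
  rw [← restrict_eq_self_of_ae_mem hρ]
  exact hf.integrableOn_Icc

lemma integral_eval_eq_of_integral_pow_eq {ρ₁ ρ₂ : Measure ℝ} [IsFiniteMeasure ρ₁]
    [IsFiniteMeasure ρ₂] {a b : ℝ} (h₁ : ∀ᵐ x ∂ρ₁, x ∈ Icc a b) (h₂ : ∀ᵐ x ∂ρ₂, x ∈ Icc a b)
    (h : ∀ n : ℕ, ∫ x, x ^ n ∂ρ₁ = ∫ x, x ^ n ∂ρ₂) (p : ℝ[X]) :
    ∫ x, p.eval x ∂ρ₁ = ∫ x, p.eval x ∂ρ₂ := by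
  simp only [eval_eq_sum_range]
  rw [integral_finsetSum _ fun i _ => ((continuous_pow i).const_mul _).integrable_of_ae_mem_Icc h₁,
    integral_finsetSum _ fun i _ => ((continuous_pow i).const_mul _).integrable_of_ae_mem_Icc h₂]
  simp only [integral_const_mul, h]

theorem ext_of_integral_pow_eq {ρ₁ ρ₂ : Measure ℝ} [IsFiniteMeasure ρ₁] [IsFiniteMeasure ρ₂]
    {a b : ℝ} (h₁ : ∀ᵐ x ∂ρ₁, x ∈ Icc a b) (h₂ : ∀ᵐ x ∂ρ₂, x ∈ Icc a b)
    (h : ∀ n : ℕ, ∫ x, x ^ n ∂ρ₁ = ∫ x, x ^ n ∂ρ₂) : ρ₁ = ρ₂ := by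
  refine ext_of_forall_integral_eq_of_IsFiniteMeasure fun f => eq_of_forall_dist_le fun ε hε => ?_
  set C := ρ₁.real univ + ρ₂.real univ + 1
  have hC : 0 < C := by positivity
  obtain ⟨p, hp⟩ := exists_polynomial_near_of_continuousOn a b f f.continuous.continuousOn
    (ε / C) (by positivity)
  have happrox : ∀ (ρ : Measure ℝ) [IsFiniteMeasure ρ], (∀ᵐ x ∂ρ, x ∈ Icc a b) →
      dist (∫ x, p.eval x ∂ρ) (∫ x, f x ∂ρ) ≤ ε / C * ρ.real univ := by
    intro ρ _ hρ
    rw [dist_eq_norm, ← integral_sub (p.continuous.integrable_of_ae_mem_Icc hρ)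
      (f.continuous.integrable_of_ae_mem_Icc hρ)]
    refine norm_integral_le_of_norm_le_const ?_
    filter_upwards [hρ] with x hx using (hp x hx).le
  calc dist (∫ x, f x ∂ρ₁) (∫ x, f x ∂ρ₂)
      ≤ dist (∫ x, p.eval x ∂ρ₁) (∫ x, f x ∂ρ₁) + dist (∫ x, p.eval x ∂ρ₂) (∫ x, f x ∂ρ₂) := by
        rw [dist_comm _ (∫ x, f x ∂ρ₁), ← integral_eval_eq_of_integral_pow_eq h₁ h₂ h p]
        exact dist_triangle _ _ _
    _ ≤ ε / C * ρ₁.real univ + ε / C * ρ₂.real univ :=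
        add_le_add (happrox ρ₁ h₁) (happrox ρ₂ h₂)
    _ ≤ ε := by
        rw [← mul_add, div_mul_eq_mul_div, div_le_iff₀ hC]
        exact mul_le_mul_of_nonneg_left (by linarith) hε.le

end Determinacy

lemma isRepMeas_dirac_one : IsRepMeas 1 (dirac 1) :=
  ⟨fun _ => zero_le_one, by simp, fun n => by simp [lintegral_dirac]⟩

namespace IsRepMeas

variable {a b : ℕ → ℝ} {μ ν : Measure ℝ}

lemma isFiniteMeasure (h : IsRepMeas a μ) : IsFiniteMeasure μ :=
  ⟨by simpa using (h.2.2 0).trans_lt ENNReal.ofReal_lt_top⟩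

lemma ae_nonneg (h : IsRepMeas a μ) : ∀ᵐ x ∂μ, 0 ≤ x := by
  simpa [ae_iff, Iio] using h.2.1

lemma integrable_pow (h : IsRepMeas a μ) (n : ℕ) : Integrable (fun x => x ^ n) μ :=
  ⟨(continuous_pow n).aestronglyMeasurable,
    (hasFiniteIntegral_iff_ofReal (h.ae_nonneg.mono fun _ hx => pow_nonneg hx n)).2
      (h.2.2 n ▸ ENNReal.ofReal_lt_top)⟩

lemma integral_pow (h : IsRepMeas a μ) (n : ℕ) : ∫ x, x ^ n ∂μ = a n := by
  rw [integral_eq_lintegral_of_nonneg_ae (h.ae_nonneg.mono fun _ hx => pow_nonneg hx n)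
    (continuous_pow n).aestronglyMeasurable, h.2.2 n, ENNReal.toReal_ofReal (h.1 n)]

lemma measureReal_univ (h : IsRepMeas a μ) : μ.real univ = a 0 := by
  simpa using h.integral_pow 0

lemma le_mul_pow_of_ae_le (h : IsRepMeas a μ) {R : ℝ} (hR : ∀ᵐ x ∂μ, x ≤ R) (n : ℕ) :
    a n ≤ a 0 * R ^ n := by
  have := h.isFiniteMeasure
  calc a n = ∫ x, x ^ n ∂μ := (h.integral_pow n).symm
    _ ≤ ∫ _, R ^ n ∂μ := by
        refine integral_mono_ae (h.integrable_pow n) (integrable_const _) ?_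
        filter_upwards [h.ae_nonneg, hR] with x hx₀ hxR using pow_le_pow_left₀ hx₀ hxR n
    _ = a 0 * R ^ n := by rw [integral_const, smul_eq_mul, h.measureReal_univ]

lemma measure_Ici_eq_zero (h : IsRepMeas a μ) {C R t : ℝ} (hR : 0 ≤ R) (hRt : R < t)
    (ha : ∀ n, a n ≤ C * R ^ n) : μ (Ici t) = 0 := by
  have := h.isFiniteMeasure
  have ht : 0 < t := hR.trans_lt hRt
  have hbound : ∀ n : ℕ, μ.real (Ici t) ≤ C * (R / t) ^ n := by
    intro n
    have hMarkov := mul_meas_ge_le_integral_of_nonneg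
      (h.ae_nonneg.mono fun _ hx => pow_nonneg hx n) (h.integrable_pow n) (t ^ n)
    have hsub : Ici t ⊆ {x | t ^ n ≤ x ^ n} := fun x hx => pow_le_pow_left₀ ht.le hx n
    rw [div_pow, ← mul_div_assoc, le_div_iff₀ (pow_pos ht n), mul_comm]
    calc t ^ n * μ.real (Ici t) ≤ t ^ n * μ.real {x | t ^ n ≤ x ^ n} :=
          mul_le_mul_of_nonneg_left (measureReal_mono hsub) (by positivity)
      _ ≤ a n := h.integral_pow n ▸ hMarkov
      _ ≤ C * R ^ n := ha n
  have hlim : Tendsto (fun n : ℕ => C * (R / t) ^ n) atTop (𝓝 0) := by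
    simpa using (tendsto_pow_atTop_nhds_zero_of_lt_one (div_nonneg hR ht.le)
      ((div_lt_one ht).2 hRt)).const_mul C
  exact (measureReal_eq_zero_iff (measure_ne_top _ _)).1
    (le_antisymm (ge_of_tendsto' hlim hbound) measureReal_nonneg)

lemma ae_le_of_le_mul_pow (h : IsRepMeas a μ) {C R : ℝ} (hR : 0 ≤ R)
    (ha : ∀ n, a n ≤ C * R ^ n) : ∀ᵐ x ∂μ, x ≤ R := by
  obtain ⟨u, -, hRu, hu⟩ := exists_seq_strictAnti_tendsto R
  have hIoi : μ (Ioi R) = 0 := by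
    rw [← iUnion_Ici_eq_Ioi_of_lt_of_tendsto hRu hu]
    exact measure_iUnion_null fun n => h.measure_Ici_eq_zero hR (hRu n) ha
  simpa [ae_iff, Ioi] using hIoi

lemma mconv (hσ : IsRepMeas a μ) (hτ : IsRepMeas b ν) : IsRepMeas (a * b) (μ ∗ₘ ν) := by
  have := hτ.isFiniteMeasure
  refine ⟨fun n => mul_nonneg (hσ.1 n) (hτ.1 n), ?_, fun n => ?_⟩
  · have hnonneg : ∀ᵐ z ∂(μ ∗ₘ ν), z ∈ Ici (0 : ℝ) :=
      ae_mem_of_mconv hσ.ae_nonneg hτ.ae_nonneg measurableSet_Ici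
        (by rintro _ ⟨x, hx : 0 ≤ x, y, hy : 0 ≤ y, rfl⟩; exact mul_nonneg hx hy)
    simpa [ae_iff, Iio] using hnonneg
  have hpow : Measurable fun x : ℝ => ENNReal.ofReal (x ^ n) := by fun_prop
  calc ∫⁻ z, ENNReal.ofReal (z ^ n) ∂(μ ∗ₘ ν)
      = ∫⁻ x, ∫⁻ y, ENNReal.ofReal ((x * y) ^ n) ∂ν ∂μ := lintegral_mconv hpow
    _ = ∫⁻ x, ENNReal.ofReal (x ^ n) * ENNReal.ofReal (b n) ∂μ := by
        refine lintegral_congr_ae ?_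
        filter_upwards [hσ.ae_nonneg] with x hx
        simp_rw [mul_pow, ENNReal.ofReal_mul (pow_nonneg hx n)]
        rw [lintegral_const_mul _ hpow, hτ.2.2 n]
    _ = ENNReal.ofReal ((a * b) n) := by
        rw [lintegral_mul_const _ hpow, hσ.2.2 n, Pi.mul_apply,
          ENNReal.ofReal_mul (hσ.1 n)]

lemma mconvPow (h : IsRepMeas a μ) (k : ℕ) : IsRepMeas (a ^ k) (mconvPow μ k) := by
  induction k with
  | zero => simpa [_root_.mconvPow] using isRepMeas_dirac_one
  | succ k ih => rw [pow_succ', _root_.mconvPow]; exact h.mconv ih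

lemma mconvPow_of_rpow {k : ℕ} (h : IsRepMeas (fun n => a n ^ (1 / (k : ℝ))) μ)
    (ha : ∀ n, 0 ≤ a n) (hk : k ≠ 0) : IsRepMeas a (_root_.mconvPow μ k) := by
  convert h.mconvPow k
  ext n
  rw [Pi.pow_apply, one_div, Real.rpow_inv_natCast_pow (ha n) hk]

theorem isDeterminate_of_ae_le (h : IsRepMeas a μ) {R : ℝ} (hR : 0 ≤ R)
    (hμR : ∀ᵐ x ∂μ, x ≤ R) : IsDeterminate a := by
  have hIcc : ∀ ρ, IsRepMeas a ρ → ∀ᵐ x ∂ρ, x ∈ Icc 0 R := fun ρ hρ =>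
    hρ.ae_nonneg.and (hρ.ae_le_of_le_mul_pow hR (h.le_mul_pow_of_ae_le hμR))
  intro ρ₁ ρ₂ h₁ h₂
  have := h₁.isFiniteMeasure
  have := h₂.isFiniteMeasure
  exact ext_of_integral_pow_eq (hIcc ρ₁ h₁) (hIcc ρ₂ h₂) fun n => by
    rw [h₁.integral_pow, h₂.integral_pow]

end IsRepMeas

section GappedSets

variable {S : Set ℝ} {a b c : ℝ}

lemma pow_succ_subset_Icc_union_Icc (hb : 0 ≤ b) (hac : a ≤ c) (hc : 0 ≤ c)
    (hS : S ⊆ Icc 0 a ∪ Icc b c) (m : ℕ) :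
    S ^ (m + 1) ⊆ Icc 0 (a * c ^ m) ∪ Icc (b ^ (m + 1)) (c ^ (m + 1)) := by
  induction m with
  | zero => simpa using hS
  | succ m ih =>
    rw [pow_succ']
    rintro _ ⟨x, hx, y, hy, rfl⟩
    have hacm : a * c ^ m ≤ c ^ (m + 1) := by
      rw [pow_succ']
      exact mul_le_mul_of_nonneg_right hac (by positivity)
    have hy' : y ∈ Icc 0 (c ^ (m + 1)) := by
      rcases ih hy with hy | hy
      · exact ⟨hy.1, hy.2.trans hacm⟩
      · exact ⟨(pow_nonneg hb _).trans hy.1, hy.2⟩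
    rcases hS hx with hx | hx
    · exact Or.inl ⟨mul_nonneg hx.1 hy'.1, mul_le_mul hx.2 hy'.2 hy'.1 (hx.1.trans hx.2)⟩
    have hx₀ : 0 ≤ x := hb.trans hx.1
    rcases ih hy with hy | hy
    · refine Or.inl ⟨mul_nonneg hx₀ hy.1, ?_⟩
      calc x * y ≤ c * (a * c ^ m) := mul_le_mul hx.2 hy.2 hy.1 hc
        _ = a * c ^ (m + 1) := by ring
    · refine Or.inr ⟨?_, ?_⟩
      · rw [pow_succ' b]
        exact mul_le_mul hx.1 hy.1 (pow_nonneg hb _) hx₀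
      · rw [pow_succ' c]
        exact mul_le_mul hx.2 hy.2 hy'.1 hc

lemma pow_succ_subset_Icc (hb : 0 ≤ b) (hac : a ≤ c) (hc : 0 ≤ c)
    (hS : S ⊆ Icc 0 a ∪ Icc b c) (m : ℕ) : S ^ (m + 1) ⊆ Icc 0 (c ^ (m + 1)) := by
  have hacm : a * c ^ m ≤ c ^ (m + 1) := by
    rw [pow_succ']
    exact mul_le_mul_of_nonneg_right hac (by positivity)
  exact (pow_succ_subset_Icc_union_Icc hb hac hc hS m).trans
    (union_subset (Icc_subset_Icc le_rfl hacm) (Icc_subset_Icc (by positivity) le_rfl))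

lemma disjoint_pow_succ_Ioo (hb : 0 ≤ b) (hac : a ≤ c) (hc : 0 ≤ c)
    (hS : S ⊆ Icc 0 a ∪ Icc b c) (m : ℕ) :
    Disjoint (S ^ (m + 1)) (Ioo (a * c ^ m) (b ^ (m + 1))) := by
  refine disjoint_left.2 fun x hx hx' => ?_
  rcases pow_succ_subset_Icc_union_Icc hb hac hc hS m hx with h | h
  · exact h.2.not_gt hx'.1
  · exact h.1.not_gt hx'.2

lemma exists_lt_subset_Icc_union_Icc (hS : IsClosed S) (hSabc : S ⊆ Icc 0 a ∪ Icc b c)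
    (ha : a ∉ S) : ∃ a' < a, S ⊆ Icc 0 a' ∪ Icc b c := by
  obtain ⟨ε, hε, hball⟩ := Metric.mem_nhds_iff.1 (hS.isOpen_compl.mem_nhds ha)
  refine ⟨a - ε, by linarith, fun x hx => ?_⟩
  rcases hSabc hx with hx' | hx'
  · refine Or.inl ⟨hx'.1, not_lt.1 fun hlt => hball ?_ hx⟩
    rw [Metric.mem_ball, Real.dist_eq, abs_sub_lt_iff]
    constructor <;> linarith [hx'.2]
  · exact Or.inr hx'

lemma exists_gt_subset_Icc_union_Icc (hS : IsClosed S) (hSabc : S ⊆ Icc 0 a ∪ Icc b c)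
    (hb : b ∉ S) : ∃ b' > b, S ⊆ Icc 0 a ∪ Icc b' c := by
  obtain ⟨ε, hε, hball⟩ := Metric.mem_nhds_iff.1 (hS.isOpen_compl.mem_nhds hb)
  refine ⟨b + ε, by linarith, fun x hx => ?_⟩
  rcases hSabc hx with hx' | hx'
  · exact Or.inl hx'
  · refine Or.inr ⟨not_lt.1 fun hlt => hball ?_ hx, hx'.2⟩
    rw [Metric.mem_ball, Real.dist_eq, abs_sub_lt_iff]
    constructor <;> linarith [hx'.1]

lemma mem_of_mul_pow_mem_pow (hS : IsClosed S) (hSabc : S ⊆ Icc 0 a ∪ Icc b c) (hb : 0 ≤ b)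
    (hac : a ≤ c) (hc : 0 < c) {m : ℕ} (hgap : a * c ^ m < b ^ (m + 1))
    (h : a * c ^ m ∈ S ^ (m + 1)) : a ∈ S := by
  by_contra ha
  obtain ⟨a', ha', hS'⟩ := exists_lt_subset_Icc_union_Icc hS hSabc ha
  rcases pow_succ_subset_Icc_union_Icc hb (ha'.le.trans hac) hc.le hS' m h with h | h
  · exact h.2.not_gt (mul_lt_mul_of_pos_right ha' (pow_pos hc m))
  · exact h.1.not_gt hgap

lemma mem_of_pow_mem_pow (hS : IsClosed S) (hSabc : S ⊆ Icc 0 a ∪ Icc b c) (hb : 0 ≤ b)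
    (hac : a ≤ c) (hc : 0 ≤ c) {m : ℕ} (hgap : a * c ^ m < b ^ (m + 1))
    (h : b ^ (m + 1) ∈ S ^ (m + 1)) : b ∈ S := by
  by_contra hb'
  obtain ⟨b', hb', hS'⟩ := exists_gt_subset_Icc_union_Icc hS hSabc hb'
  rcases pow_succ_subset_Icc_union_Icc (hb.trans hb'.le) hac hc hS' m h with h | h
  · exact h.2.not_gt hgap
  · exact h.1.not_gt (pow_lt_pow_left₀ hb' hb m.succ_ne_zero)

lemma support_subset_Icc_union_Icc {ν : Measure ℝ} (h₀ : ν (Iio 0) = 0)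
    (hc : c ∈ upperBounds ν.support) (hab : ν (Ioo a b) = 0) :
    ν.support ⊆ Icc 0 a ∪ Icc b c := by
  intro x hx
  have hx₀ : 0 ≤ x := not_lt.1 fun h => subset_compl_support_of_isOpen isOpen_Iio h₀ h hx
  have hxab : x ∉ Ioo a b := fun h => subset_compl_support_of_isOpen isOpen_Ioo hab h hx
  by_cases hxa : x ≤ a
  · exact Or.inl ⟨hx₀, hxa⟩
  · exact Or.inr ⟨not_lt.1 fun h => hxab ⟨not_le.1 hxa, h⟩, hc hx⟩

end GappedSets

theorem stmt7 (a : ℕ → ℝ) (μ ν : Measure ℝ) (κ : ℕ) (hκ : 2 ≤ κ)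
    (hμ : IsRepMeas a μ)
    (hν : IsRepMeas (fun n => a n ^ (1 / (κ : ℝ))) ν)
    (α β γ : ℝ) (hγ : IsLUB (msupport ν) γ)
    (hα0 : 0 ≤ α) (hαβ : α < β) (hβγ : β ≤ γ)
    (hhole : ν (Set.Ioo α β) = 0)
    (hstrict : α * γ ^ (κ - 1) < β ^ κ) :
    (μ (Set.Ioo (α * γ ^ (κ - 1)) (β ^ κ)) = 0 ∧ IsLUB (msupport μ) (γ ^ κ)) ∧
    (α ∈ msupport ν ↔ α * γ ^ (κ - 1) ∈ msupport μ) ∧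
    (β ∈ msupport ν ↔ β ^ κ ∈ msupport μ) := by
  obtain ⟨m, rfl⟩ : ∃ m, κ = m + 1 := ⟨κ - 1, by omega⟩
  rw [Nat.add_sub_cancel] at hstrict ⊢
  simp only [msupport_eq_support] at hγ ⊢
  have := hν.isFiniteMeasure
  set S := ν.support
  have hβ : 0 < β := hα0.trans_lt hαβ
  have hγ₀ : 0 < γ := hβ.trans_le hβγ
  have hαγ : α ≤ γ := hαβ.le.trans hβγ
  have hS : S ⊆ Icc 0 α ∪ Icc β γ := support_subset_Icc_union_Icc hν.2.1 hγ.1 hhole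
  have hγS : γ ∈ S := hγ.mem_of_isClosed hγ.nonempty isClosed_support
  have hSγ : S ⊆ Icc 0 γ :=
    hS.trans (union_subset (Icc_subset_Icc le_rfl hαγ) (Icc_subset_Icc hβ.le le_rfl))
  have hsupp : (mconvPow ν (m + 1)).support = S ^ (m + 1) :=
    support_mconvPow ν (isCompact_Icc.of_isClosed_subset isClosed_support hSγ) _
  have hρ := hν.mconvPow_of_rpow hμ.1 m.succ_ne_zero
  have hμρ : μ = mconvPow ν (m + 1) := by
    refine hρ.isDeterminate_of_ae_le (pow_nonneg hγ₀.le (m + 1)) ?_ μ _ hμ hρ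
    filter_upwards [support_mem_ae] with x hx
    exact (pow_succ_subset_Icc hβ.le hαγ hγ₀.le hS m (hsupp ▸ hx)).2
  rw [hμρ, hsupp]
  refine ⟨⟨?_, ?_⟩, ⟨?_, ?_⟩, ⟨?_, ?_⟩⟩
  · exact measure_eq_zero_of_disjoint_support (hsupp ▸ disjoint_pow_succ_Ioo hβ.le hαγ hγ₀.le hS m)
  · exact ⟨fun x hx => (pow_succ_subset_Icc hβ.le hαγ hγ₀.le hS m hx).2,
      fun c hc => hc (Set.pow_mem_pow hγS)⟩
  · exact fun hαS => pow_succ' S m ▸ mul_mem_mul hαS (Set.pow_mem_pow hγS)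
  · exact mem_of_mul_pow_mem_pow isClosed_support hS hβ.le hαγ hγ₀ hstrict
  · exact fun hβS => Set.pow_mem_pow hβS
  · exact mem_of_pow_mem_pow isClosed_support hS hβ.le hαγ hγ₀.le hstrict
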